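/- arXiv:0809.2167 — 2 statements merged into one kernel-verified Lean document; each statement's English description precedes it below -/
import Mathlib

section
/- Let Y₀ ≥ 0 and N > 0 with N e^{−2πY₀} ≤ 1/2, and let Λ be holomorphic on {W ∈ ℂ : Im W < −Y₀} with Λ(W+1) = Λ(W) and |Λ(W)| ≤ N e^{2π Im W}. Set Ψ := id + Λ and let α ∈ ℂ with Im α ≥ 1, and F := T_α ∘ Ψ. Then: (a) Ψ is injective on {Im W < −Y₀ − 1} and its image contains {Im W < −Y₀ − 2}; (b) on H′ := {Im W < −Y₀ − 2} the inverse iterates F^{−n} (n ≥ 1) are well defined (using the inverse branch of Ψ taking values in {Im W < −Y₀ − 1}), map H′ into itself, and satisfy Im F^{−n}(W) ≤ Im W − n(Im α − 1/2); (c) the series G(W) := −Σ_{n ≥ 1} Λ(F^{−n}(W)) converges absolutely and uniformly on H′ with |G(W)| ≤ 2N e^{2π(Im W − Im α + 1)}; (d) the map H_* := id + G commutes with T₁ and satisfies H_* ∘ T_α ∘ Ψ = T_α ∘ H_* for all W with Im W < −Y₀ − 3 − Im α. -/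
/-!
Cauchy estimates on discs of radius `1/2` make `Λ` a `1/2`-contraction on `{Im W ≤ -Y₀ - 1}`, so
`Ψ = id + Λ` is injective there and, by Banach's fixed point theorem, covers `{Im W < -Y₀ - 2}`.
Since `|Im Λ| ≤ 1/2`, each inverse step of `F = T_α ∘ Ψ` lowers `Im` by at least
`Im α - 1/2 ≥ 1/2`, so `|Λ ∘ F^{-n}|` decays like `e^{-πn} ≤ 2^{-n}`. Periodicity of `Λ` makes
`F^{-1}` commute with `T₁`, and `F^{-1} ∘ F = id` shifts the series `Σ Λ ∘ F^{-n}` by its first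
term `Λ`, which is the conjugacy `H_* ∘ F = T_α ∘ H_*`.
-/

open Filter Complex

open Metric Set
open scoped NNReal

theorem Real.exp_neg_pi_le_half : Real.exp (-Real.pi) ≤ 1 / 2 := by
  have h2 : 2 ≤ Real.exp 1 := by linarith [Real.add_one_le_exp 1]
  calc Real.exp (-Real.pi) ≤ Real.exp (-1) := Real.exp_le_exp.mpr (by linarith [Real.pi_gt_three])
    _ = (Real.exp 1)⁻¹ := Real.exp_neg 1
    _ ≤ 1 / 2 := by rw [one_div]; exact inv_anti₀ (by norm_num) h2

theorem LipschitzOnWith.injOn_add_self {E : Type*} [NormedAddCommGroup E] {g : E → E}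
    {K : ℝ≥0} {s : Set E} (hg : LipschitzOnWith K g s) (hK : K < 1) :
    InjOn (fun x => x + g x) s := by
  intro x hx y hy hxy
  have hsub : x - y = g y - g x := by
    simp only at hxy
    linear_combination (norm := abel) hxy
  have hle : ‖x - y‖ ≤ K * ‖x - y‖ := by
    calc ‖x - y‖ = ‖g y - g x‖ := by rw [hsub]
      _ ≤ K * ‖y - x‖ := hg.norm_sub_le hy hx
      _ = K * ‖x - y‖ := by rw [norm_sub_rev]
  have : ‖x - y‖ = 0 := by nlinarith [norm_nonneg (x - y), (show (K : ℝ) < 1 from hK)]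
  exact sub_eq_zero.mp (norm_eq_zero.mp this)

theorem Complex.im_le_of_mem_closedBall {z w : ℂ} {r : ℝ} (h : w ∈ closedBall z r) :
    w.im ≤ z.im + r := by
  have h1 : |(w - z).im| ≤ r := (abs_im_le_norm _).trans (mem_closedBall_iff_norm.mp h)
  rw [sub_im] at h1
  linarith [(abs_le.mp h1).2]

theorem exists_add_self_eq_of_lipschitzOnWith {E : Type*} [NormedAddCommGroup E] [CompleteSpace E]
    {g : E → E} {K : ℝ≥0} {x₀ : E} {r : ℝ} (hr : 0 ≤ r) (hK : K < 1)
    (hg : LipschitzOnWith K g (closedBall x₀ r)) (hgr : ∀ x ∈ closedBall x₀ r, ‖g x‖ ≤ r) :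
    ∃ x ∈ closedBall x₀ r, x + g x = x₀ := by
  have hmaps : MapsTo (fun x => x₀ - g x) (closedBall x₀ r) (closedBall x₀ r) := fun x hx => by
    simpa [dist_eq_norm] using hgr x hx
  have hcontr : ContractingWith K (hmaps.restrict _ _ _) := ⟨hK, fun x y => by
    simpa [Subtype.edist_eq, edist_sub_left] using hg x.2 y.2⟩
  obtain ⟨x, hx, hfix, -⟩ := hcontr.exists_fixedPoint' isClosed_closedBall.isComplete hmaps
    (mem_closedBall_self hr) (edist_ne_top _ _)
  exact ⟨x, hx, eq_sub_iff_add_eq.mp hfix.symm⟩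

namespace FatouGlutsyuk

variable {Y₀ : ℝ} {Λ : ℂ → ℂ}

theorem norm_le_exp_div_two {N : ℝ} (hNY : N * Real.exp (-(2 * Real.pi * Y₀)) ≤ 1 / 2)
    (hbound : ∀ W : ℂ, W.im < -Y₀ → ‖Λ W‖ ≤ N * Real.exp (2 * Real.pi * W.im))
    {W : ℂ} (hW : W.im < -Y₀) : ‖Λ W‖ ≤ Real.exp (2 * Real.pi * (W.im + Y₀)) / 2 :=
  calc ‖Λ W‖ ≤ N * Real.exp (2 * Real.pi * W.im) := hbound W hW
    _ = N * Real.exp (-(2 * Real.pi * Y₀)) * Real.exp (2 * Real.pi * (W.im + Y₀)) := by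
      rw [mul_assoc N, ← Real.exp_add]; ring_nf
    _ ≤ 1 / 2 * Real.exp (2 * Real.pi * (W.im + Y₀)) := by gcongr
    _ = Real.exp (2 * Real.pi * (W.im + Y₀)) / 2 := by ring

theorem norm_le_half
    (hΛ : ∀ W : ℂ, W.im < -Y₀ → ‖Λ W‖ ≤ Real.exp (2 * Real.pi * (W.im + Y₀)) / 2)
    {W : ℂ} (hW : W.im < -Y₀) : ‖Λ W‖ ≤ 1 / 2 := by
  have : Real.exp (2 * Real.pi * (W.im + Y₀)) ≤ 1 :=
    Real.exp_le_one_iff.mpr (mul_nonpos_of_nonneg_of_nonpos (by positivity) (by linarith))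
  linarith [hΛ W hW]

theorem norm_deriv_le_half
    (hΛ : ∀ W : ℂ, W.im < -Y₀ → ‖Λ W‖ ≤ Real.exp (2 * Real.pi * (W.im + Y₀)) / 2)
    (hhol : DifferentiableOn ℂ Λ {W : ℂ | W.im < -Y₀}) {z : ℂ}
    (hz : z.im ≤ -Y₀ - 1) : ‖deriv Λ z‖ ≤ 1 / 2 := by
  have hball : closedBall z (1 / 2) ⊆ {W : ℂ | W.im < -Y₀} := fun w hw => by
    have := Complex.im_le_of_mem_closedBall hw
    simp only [mem_ofPred_eq]; linarith
  have hdc : DiffContOnCl ℂ Λ (ball z (1 / 2)) := by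
    refine DifferentiableOn.diffContOnCl ?_
    rw [closure_ball z (by norm_num)]
    exact hhol.mono hball
  have hsphere : ∀ w ∈ sphere z (1 / 2), ‖Λ w‖ ≤ 1 / 4 := fun w hw => by
    have hw' := Complex.im_le_of_mem_closedBall (sphere_subset_closedBall hw)
    calc ‖Λ w‖ ≤ Real.exp (2 * Real.pi * (w.im + Y₀)) / 2 := hΛ w (by linarith)
      _ ≤ Real.exp (-Real.pi) / 2 := by gcongr; nlinarith [Real.pi_pos]
      _ ≤ 1 / 4 := by linarith [Real.exp_neg_pi_le_half]
  calc ‖deriv Λ z‖ ≤ (1 / 4) / (1 / 2) :=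
        Complex.norm_deriv_le_of_forall_mem_sphere_norm_le (by norm_num) hdc hsphere
    _ = 1 / 2 := by norm_num

theorem lipschitzOnWith_half
    (hΛ : ∀ W : ℂ, W.im < -Y₀ → ‖Λ W‖ ≤ Real.exp (2 * Real.pi * (W.im + Y₀)) / 2)
    (hhol : DifferentiableOn ℂ Λ {W : ℂ | W.im < -Y₀}) :
    LipschitzOnWith (1 / 2) Λ {z : ℂ | z.im ≤ -Y₀ - 1} := by
  refine (convex_halfSpace_im_le _).lipschitzOnWith_of_nnnorm_deriv_le
    (fun z hz => hhol.differentiableAt ?_) (fun z hz => ?_)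
  · refine (isOpen_lt continuous_im continuous_const).mem_nhds ?_
    simp only [mem_ofPred_eq] at hz ⊢
    linarith
  · rw [← NNReal.coe_le_coe]
    simpa using norm_deriv_le_half hΛ hhol hz

theorem injOn_add_self
    (hΛ : ∀ W : ℂ, W.im < -Y₀ → ‖Λ W‖ ≤ Real.exp (2 * Real.pi * (W.im + Y₀)) / 2)
    (hhol : DifferentiableOn ℂ Λ {W : ℂ | W.im < -Y₀}) :
    InjOn (fun W => W + Λ W) {W : ℂ | W.im < -Y₀ - 1} :=
  ((lipschitzOnWith_half hΛ hhol).mono (ofPred_subset_ofPred.mpr fun _ => le_of_lt)).injOn_add_self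
    (by norm_num)

theorem subset_image_add_self
    (hΛ : ∀ W : ℂ, W.im < -Y₀ → ‖Λ W‖ ≤ Real.exp (2 * Real.pi * (W.im + Y₀)) / 2)
    (hhol : DifferentiableOn ℂ Λ {W : ℂ | W.im < -Y₀}) :
    {W : ℂ | W.im < -Y₀ - 2} ⊆ (fun W => W + Λ W) '' {W : ℂ | W.im < -Y₀ - 1} := by
  intro W₀ hW₀
  have hball : closedBall W₀ (1 / 2) ⊆ {W : ℂ | W.im < -Y₀ - 1} := fun W hW => by
    have := Complex.im_le_of_mem_closedBall hW
    simp only [mem_ofPred_eq] at hW₀ ⊢; linarith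
  obtain ⟨V, hV, hVW⟩ := exists_add_self_eq_of_lipschitzOnWith (by norm_num)
    (by norm_num : (1 / 2 : ℝ≥0) < 1)
    ((lipschitzOnWith_half hΛ hhol).mono (hball.trans (ofPred_subset_ofPred.mpr fun _ => le_of_lt)))
    (fun V hV => norm_le_half hΛ (by have : V.im < -Y₀ - 1 := hball hV; linarith))
  exact ⟨V, hball hV, hVW⟩

/-- `Finv` is a right inverse of `F = T_α ∘ (id + Λ)` on `H' = {Im W < -Y₀ - 2}` with values in
`{Im W < -Y₀ - 1}`. -/
def IsInverseBranch (Y₀ : ℝ) (Λ : ℂ → ℂ) (α : ℂ) (Finv : ℂ → ℂ) : Prop :=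
  ∀ W : ℂ, W.im < -Y₀ - 2 → (Finv W).im < -Y₀ - 1 ∧ Finv W + Λ (Finv W) + α = W

variable {α : ℂ} {Finv : ℂ → ℂ}

theorem exists_isInverseBranch (hα : 0 ≤ α.im)
    (himage : {W : ℂ | W.im < -Y₀ - 2} ⊆ (fun W => W + Λ W) '' {W : ℂ | W.im < -Y₀ - 1}) :
    ∃ Finv, IsInverseBranch Y₀ Λ α Finv := by
  have : ∀ W : ℂ, ∃ V : ℂ, W.im < -Y₀ - 2 → V.im < -Y₀ - 1 ∧ V + Λ V + α = W := fun W => by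
    by_cases hW : W.im < -Y₀ - 2
    · obtain ⟨V, hV, hVW⟩ := himage (show (W - α).im < -Y₀ - 2 by rw [sub_im]; linarith)
      exact ⟨V, fun _ => ⟨hV, eq_sub_iff_add_eq.mp hVW⟩⟩
    · exact ⟨0, fun h => absurd h hW⟩
  choose Finv hFinv using this
  exact ⟨Finv, hFinv⟩

theorem IsInverseBranch.eq_of_add_eq (hFinv : IsInverseBranch Y₀ Λ α Finv)
    (hinj : InjOn (fun W => W + Λ W) {W : ℂ | W.im < -Y₀ - 1}) {W V : ℂ} (hW : W.im < -Y₀ - 2)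
    (hV : V.im < -Y₀ - 1) (hVW : V + Λ V + α = W) : V = Finv W :=
  hinj hV (hFinv W hW).1 (add_right_cancel (hVW.trans (hFinv W hW).2.symm))

theorem IsInverseBranch.im_iterate_le (hFinv : IsInverseBranch Y₀ Λ α Finv)
    (hhalf : ∀ W : ℂ, W.im < -Y₀ → ‖Λ W‖ ≤ 1 / 2) (hα : 1 / 2 ≤ α.im) (n : ℕ) {W : ℂ}
    (hW : W.im < -Y₀ - 2) :
    (Finv^[n] W).im < -Y₀ - 2 ∧ (Finv^[n] W).im ≤ W.im - n * (α.im - 1 / 2) := by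
  induction n with
  | zero => simpa using hW
  | succ n ih =>
    obtain ⟨hlt, hle⟩ := ih
    rw [Function.iterate_succ_apply']
    obtain ⟨hV, hVeq⟩ := hFinv _ hlt
    have him := congrArg Complex.im hVeq
    simp only [add_im] at him
    have hΛim := (abs_le.mp ((abs_im_le_norm _).trans (hhalf (Finv (Finv^[n] W)) (by linarith)))).1
    push_cast
    constructor <;> linarith

theorem IsInverseBranch.norm_comp_iterate_le (hFinv : IsInverseBranch Y₀ Λ α Finv) {N : ℝ}
    (hN : 0 ≤ N) (hbound : ∀ W : ℂ, W.im < -Y₀ → ‖Λ W‖ ≤ N * Real.exp (2 * Real.pi * W.im))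
    (hhalf : ∀ W : ℂ, W.im < -Y₀ → ‖Λ W‖ ≤ 1 / 2) (hα : 1 ≤ α.im) (n : ℕ) {W : ℂ} {y : ℝ}
    (hW : W.im < -Y₀ - 2) (hy : W.im ≤ y) :
    ‖Λ (Finv^[n + 1] W)‖ ≤ N * Real.exp (2 * Real.pi * (y - α.im + 1)) * (1 / 2) ^ n := by
  obtain ⟨hlt, hle⟩ := hFinv.im_iterate_le hhalf (by linarith) (n + 1) hW
  have hclimb : (Finv^[n + 1] W).im ≤ y - α.im + 1 - n / 2 := by
    push_cast at hle
    nlinarith [mul_nonneg (Nat.cast_nonneg n : (0 : ℝ) ≤ n) (sub_nonneg.mpr hα)]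
  calc ‖Λ (Finv^[n + 1] W)‖ ≤ N * Real.exp (2 * Real.pi * (Finv^[n + 1] W).im) :=
        hbound _ (by linarith)
    _ ≤ N * Real.exp (2 * Real.pi * (y - α.im + 1) + n * -Real.pi) := by
        gcongr
        nlinarith [Real.pi_pos]
    _ = N * Real.exp (2 * Real.pi * (y - α.im + 1)) * Real.exp (-Real.pi) ^ n := by
        rw [Real.exp_add, Real.exp_nat_mul]; ring
    _ ≤ N * Real.exp (2 * Real.pi * (y - α.im + 1)) * (1 / 2) ^ n := by
        gcongr
        exact Real.exp_neg_pi_le_half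

theorem IsInverseBranch.summable_norm_comp_iterate (hFinv : IsInverseBranch Y₀ Λ α Finv) {N : ℝ}
    (hN : 0 ≤ N) (hbound : ∀ W : ℂ, W.im < -Y₀ → ‖Λ W‖ ≤ N * Real.exp (2 * Real.pi * W.im))
    (hhalf : ∀ W : ℂ, W.im < -Y₀ → ‖Λ W‖ ≤ 1 / 2) (hα : 1 ≤ α.im) {W : ℂ}
    (hW : W.im < -Y₀ - 2) : Summable fun n : ℕ => ‖Λ (Finv^[n + 1] W)‖ :=
  Summable.of_nonneg_of_le (fun _ => norm_nonneg _)
    (fun n => hFinv.norm_comp_iterate_le hN hbound hhalf hα n hW le_rfl)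
    (summable_geometric_two.mul_left _)

theorem IsInverseBranch.norm_tsum_comp_iterate_le (hFinv : IsInverseBranch Y₀ Λ α Finv) {N : ℝ}
    (hN : 0 ≤ N) (hbound : ∀ W : ℂ, W.im < -Y₀ → ‖Λ W‖ ≤ N * Real.exp (2 * Real.pi * W.im))
    (hhalf : ∀ W : ℂ, W.im < -Y₀ → ‖Λ W‖ ≤ 1 / 2) (hα : 1 ≤ α.im) {W : ℂ}
    (hW : W.im < -Y₀ - 2) :
    ‖∑' n : ℕ, Λ (Finv^[n + 1] W)‖ ≤ 2 * N * Real.exp (2 * Real.pi * (W.im - α.im + 1)) :=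
  calc ‖∑' n : ℕ, Λ (Finv^[n + 1] W)‖ ≤ ∑' n : ℕ, ‖Λ (Finv^[n + 1] W)‖ :=
        norm_tsum_le_tsum_norm (hFinv.summable_norm_comp_iterate hN hbound hhalf hα hW)
    _ ≤ ∑' n : ℕ, N * Real.exp (2 * Real.pi * (W.im - α.im + 1)) * (1 / 2) ^ n :=
        Summable.tsum_le_tsum (fun n => hFinv.norm_comp_iterate_le hN hbound hhalf hα n hW le_rfl)
          (hFinv.summable_norm_comp_iterate hN hbound hhalf hα hW)
          (summable_geometric_two.mul_left _)
    _ = 2 * N * Real.exp (2 * Real.pi * (W.im - α.im + 1)) := by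
        rw [tsum_mul_left, tsum_geometric_two]; ring

theorem IsInverseBranch.apply_add_one (hFinv : IsInverseBranch Y₀ Λ α Finv)
    (hinj : InjOn (fun W => W + Λ W) {W : ℂ | W.im < -Y₀ - 1})
    (hper : ∀ W : ℂ, W.im < -Y₀ → Λ (W + 1) = Λ W) {W : ℂ} (hW : W.im < -Y₀ - 2) :
    Finv (W + 1) = Finv W + 1 := by
  obtain ⟨hV, hVW⟩ := hFinv W hW
  refine (hFinv.eq_of_add_eq hinj (by simpa using hW) (by simpa using hV) ?_).symm
  rw [hper _ (by linarith)]
  linear_combination hVW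

theorem IsInverseBranch.iterate_add_one (hFinv : IsInverseBranch Y₀ Λ α Finv)
    (hinj : InjOn (fun W => W + Λ W) {W : ℂ | W.im < -Y₀ - 1})
    (hper : ∀ W : ℂ, W.im < -Y₀ → Λ (W + 1) = Λ W)
    (hhalf : ∀ W : ℂ, W.im < -Y₀ → ‖Λ W‖ ≤ 1 / 2) (hα : 1 / 2 ≤ α.im) (n : ℕ) {W : ℂ}
    (hW : W.im < -Y₀ - 2) : Finv^[n] (W + 1) = Finv^[n] W + 1 := by
  induction n with
  | zero => rfl
  | succ n ih =>
    rw [Function.iterate_succ_apply', Function.iterate_succ_apply', ih,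
      hFinv.apply_add_one hinj hper (hFinv.im_iterate_le hhalf hα n hW).1]

theorem IsInverseBranch.tsum_comp_iterate_add_one (hFinv : IsInverseBranch Y₀ Λ α Finv)
    (hinj : InjOn (fun W => W + Λ W) {W : ℂ | W.im < -Y₀ - 1})
    (hper : ∀ W : ℂ, W.im < -Y₀ → Λ (W + 1) = Λ W)
    (hhalf : ∀ W : ℂ, W.im < -Y₀ → ‖Λ W‖ ≤ 1 / 2) (hα : 1 / 2 ≤ α.im) {W : ℂ}
    (hW : W.im < -Y₀ - 2) :
    ∑' n : ℕ, Λ (Finv^[n + 1] (W + 1)) = ∑' n : ℕ, Λ (Finv^[n + 1] W) :=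
  tsum_congr fun n => by
    rw [hFinv.iterate_add_one hinj hper hhalf hα _ hW, hper]
    linarith [(hFinv.im_iterate_le hhalf hα (n + 1) hW).1]

theorem IsInverseBranch.tsum_comp_iterate_add_self_add (hFinv : IsInverseBranch Y₀ Λ α Finv)
    (hinj : InjOn (fun W => W + Λ W) {W : ℂ | W.im < -Y₀ - 1})
    (hhalf : ∀ W : ℂ, W.im < -Y₀ → ‖Λ W‖ ≤ 1 / 2) (hα : 0 ≤ α.im) {W : ℂ}
    (hW : W.im < -Y₀ - 3 - α.im)
    (hsum : Summable fun n : ℕ => Λ (Finv^[n + 1] W)) :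
    ∑' n : ℕ, Λ (Finv^[n + 1] (W + Λ W + α)) = Λ W + ∑' n : ℕ, Λ (Finv^[n + 1] W) := by
  have hΛim := (abs_le.mp ((abs_im_le_norm (Λ W)).trans (hhalf W (by linarith)))).2
  have hW' : (W + Λ W + α).im < -Y₀ - 2 := by simp only [add_im]; linarith
  have hinv : Finv (W + Λ W + α) = W :=
    (hFinv.eq_of_add_eq hinj hW' (by linarith) rfl).symm
  have hiter (n : ℕ) : Finv^[n + 1] (W + Λ W + α) = Finv^[n] W := by
    rw [Function.iterate_succ_apply, hinv]
  simp only [hiter]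
  exact ((summable_nat_add_iff (f := fun n => Λ (Finv^[n] W)) 1).mp hsum).tsum_eq_zero_add

end FatouGlutsyuk

theorem stmt_7_general (Y₀ N : ℝ) (hN : 0 < N)
    (hNY : N * Real.exp (-(2 * Real.pi * Y₀)) ≤ 1 / 2)
    (Λ : ℂ → ℂ)
    (hhol : DifferentiableOn ℂ Λ {W : ℂ | W.im < -Y₀})
    (hper : ∀ W : ℂ, W.im < -Y₀ → Λ (W + 1) = Λ W)
    (hbound : ∀ W : ℂ, W.im < -Y₀ → ‖Λ W‖ ≤ N * Real.exp (2 * Real.pi * W.im))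
    (α : ℂ) (hα : 1 ≤ α.im) :
    -- (a) `Ψ = id + Λ` is injective on `{Im W < -Y₀ - 1}` and its image contains
    -- `{Im W < -Y₀ - 2}`
    Set.InjOn (fun W => W + Λ W) {W : ℂ | W.im < -Y₀ - 1} ∧
    {W : ℂ | W.im < -Y₀ - 2} ⊆ (fun W => W + Λ W) '' {W : ℂ | W.im < -Y₀ - 1} ∧
    -- the inverse branch `Finv` of `F = T_α ∘ Ψ` with values in `{Im W < -Y₀ - 1}`
    ∃ Finv : ℂ → ℂ,
      (∀ W : ℂ, W.im < -Y₀ - 2 →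
        (Finv W).im < -Y₀ - 1 ∧ (Finv W + Λ (Finv W)) + α = W ∧
        (∀ V : ℂ, V.im < -Y₀ - 1 → (V + Λ V) + α = W → V = Finv W)) ∧
      -- (b) the inverse iterates map `H' = {Im W < -Y₀ - 2}` into itself and climb
      (∀ n : ℕ, 1 ≤ n → ∀ W : ℂ, W.im < -Y₀ - 2 →
        (Finv^[n] W).im < -Y₀ - 2 ∧
        (Finv^[n] W).im ≤ W.im - n * (α.im - 1 / 2)) ∧
      -- (c) absolute and uniform convergence of the series defining `G`, and its bound
      (∀ W : ℂ, W.im < -Y₀ - 2 → Summable fun n : ℕ => ‖Λ (Finv^[n + 1] W)‖) ∧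
      (∃ u : ℕ → ℝ, Summable u ∧
        ∀ (n : ℕ) (W : ℂ), W.im < -Y₀ - 2 → ‖Λ (Finv^[n + 1] W)‖ ≤ u n) ∧
      (∀ W : ℂ, W.im < -Y₀ - 2 →
        ‖-∑' n : ℕ, Λ (Finv^[n + 1] W)‖ ≤
          2 * N * Real.exp (2 * Real.pi * (W.im - α.im + 1))) ∧
      -- (d) `H_* = id + G` commutes with `T₁` and conjugates `T_α ∘ Ψ` to `T_α`
      (∀ W : ℂ, W.im < -Y₀ - 2 →
        (W + 1) + -∑' n : ℕ, Λ (Finv^[n + 1] (W + 1)) =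
          (W + -∑' n : ℕ, Λ (Finv^[n + 1] W)) + 1) ∧
      (∀ W : ℂ, W.im < -Y₀ - 3 - α.im →
        ((W + Λ W) + α) + -∑' n : ℕ, Λ (Finv^[n + 1] ((W + Λ W) + α)) =
          (W + -∑' n : ℕ, Λ (Finv^[n + 1] W)) + α) := by
  have hΛ (W : ℂ) (hW : W.im < -Y₀) := FatouGlutsyuk.norm_le_exp_div_two hNY hbound hW
  have hhalf (W : ℂ) (hW : W.im < -Y₀) := FatouGlutsyuk.norm_le_half hΛ hW
  have hinj := FatouGlutsyuk.injOn_add_self hΛ hhol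
  have himage := FatouGlutsyuk.subset_image_add_self hΛ hhol
  obtain ⟨Finv, hFinv⟩ := FatouGlutsyuk.exists_isInverseBranch (by linarith) himage
  have hsum (W : ℂ) (hW : W.im < -Y₀ - 2) :=
    hFinv.summable_norm_comp_iterate hN.le hbound hhalf hα hW
  refine ⟨hinj, himage, Finv, fun W hW => ⟨(hFinv W hW).1, (hFinv W hW).2,
      fun V hV hVW => hFinv.eq_of_add_eq hinj hW hV hVW⟩,
    fun n _ W hW => hFinv.im_iterate_le hhalf (by linarith) n hW, hsum,
    ⟨fun n => N * Real.exp (2 * Real.pi * (-Y₀ - 2 - α.im + 1)) * (1 / 2) ^ n,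
      summable_geometric_two.mul_left _,
      fun n W hW => hFinv.norm_comp_iterate_le hN.le hbound hhalf hα n hW hW.le⟩,
    fun W hW => ?_, fun W hW => ?_, fun W hW => ?_⟩
  · rw [norm_neg]
    exact hFinv.norm_tsum_comp_iterate_le hN.le hbound hhalf hα hW
  · rw [hFinv.tsum_comp_iterate_add_one hinj hper hhalf (by linarith) hW]
    ring
  · rw [hFinv.tsum_comp_iterate_add_self_add hinj hhalf (by linarith) hW
      (hsum W (by linarith)).of_norm]
    ring

/-- Backward telescopic-series construction of the Fatou–Glutsyuk normalization
`H_* = id + G`, `G = -Σ_{n≥1} Λ ∘ F^{-n}`, conjugating `T_α ∘ Ψ` (with `Ψ = id + Λ`,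
`F = T_α ∘ Ψ`) to the translation `T_α`, in the sector where `Im α ≥ 1`. -/
theorem stmt_7 (Y₀ N : ℝ) (hY₀ : 0 ≤ Y₀) (hN : 0 < N)
    (hNY : N * Real.exp (-(2 * Real.pi * Y₀)) ≤ 1 / 2)
    (Λ : ℂ → ℂ)
    (hhol : DifferentiableOn ℂ Λ {W : ℂ | W.im < -Y₀})
    (hper : ∀ W : ℂ, W.im < -Y₀ → Λ (W + 1) = Λ W)
    (hbound : ∀ W : ℂ, W.im < -Y₀ → ‖Λ W‖ ≤ N * Real.exp (2 * Real.pi * W.im))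
    (α : ℂ) (hα : 1 ≤ α.im) :
    -- (a) `Ψ = id + Λ` is injective on `{Im W < -Y₀ - 1}` and its image contains
    -- `{Im W < -Y₀ - 2}`
    Set.InjOn (fun W => W + Λ W) {W : ℂ | W.im < -Y₀ - 1} ∧
    {W : ℂ | W.im < -Y₀ - 2} ⊆ (fun W => W + Λ W) '' {W : ℂ | W.im < -Y₀ - 1} ∧
    -- the inverse branch `Finv` of `F = T_α ∘ Ψ` with values in `{Im W < -Y₀ - 1}`
    ∃ Finv : ℂ → ℂ,
      (∀ W : ℂ, W.im < -Y₀ - 2 →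
        (Finv W).im < -Y₀ - 1 ∧ (Finv W + Λ (Finv W)) + α = W ∧
        (∀ V : ℂ, V.im < -Y₀ - 1 → (V + Λ V) + α = W → V = Finv W)) ∧
      -- (b) the inverse iterates map `H' = {Im W < -Y₀ - 2}` into itself and climb
      (∀ n : ℕ, 1 ≤ n → ∀ W : ℂ, W.im < -Y₀ - 2 →
        (Finv^[n] W).im < -Y₀ - 2 ∧
        (Finv^[n] W).im ≤ W.im - n * (α.im - 1 / 2)) ∧
      -- (c) absolute and uniform convergence of the series defining `G`, and its bound
      (∀ W : ℂ, W.im < -Y₀ - 2 → Summable fun n : ℕ => ‖Λ (Finv^[n + 1] W)‖) ∧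
      (∃ u : ℕ → ℝ, Summable u ∧
        ∀ (n : ℕ) (W : ℂ), W.im < -Y₀ - 2 → ‖Λ (Finv^[n + 1] W)‖ ≤ u n) ∧
      (∀ W : ℂ, W.im < -Y₀ - 2 →
        ‖-∑' n : ℕ, Λ (Finv^[n + 1] W)‖ ≤
          2 * N * Real.exp (2 * Real.pi * (W.im - α.im + 1))) ∧
      -- (d) `H_* = id + G` commutes with `T₁` and conjugates `T_α ∘ Ψ` to `T_α`
      (∀ W : ℂ, W.im < -Y₀ - 2 →
        (W + 1) + -∑' n : ℕ, Λ (Finv^[n + 1] (W + 1)) =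
          (W + -∑' n : ℕ, Λ (Finv^[n + 1] W)) + 1) ∧
      (∀ W : ℂ, W.im < -Y₀ - 3 - α.im →
        ((W + Λ W) + α) + -∑' n : ℕ, Λ (Finv^[n + 1] ((W + Λ W) + α)) =
          (W + -∑' n : ℕ, Λ (Finv^[n + 1] W)) + α) :=
  stmt_7_general Y₀ N hN hNY Λ hhol hper hbound α hα
end

section
/- Let n ≥ 1 be an integer, A ∈ ℂ, and C, β, F ∈ ℂ \ {0} with Cⁿ ≠ 1 and Fⁿ = ((Cβ)ⁿ − 1)/(βⁿ(Cⁿ − 1)) (equivalently, Fⁿ = ((Cβ)^{−n} − 1)/(C^{−n} − 1)). Let m_{A,n}(w) := w·(1 + A wⁿ)^{−1/n} with the principal n-th root z^{1/n} := exp((1/n)·Log z). Then h := m_{A,n} satisfies the functional equation h(F C^{−1} · h(Cβ w)) = C^{−1} · h(F Cβ · h(w)) for all w in some punctured neighborhood of 0. -/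
/-!
Since `m_{A,n}(w)⁻ⁿ = w⁻ⁿ + A`, the maps `m_{A,n}` behave like translations in the
coordinate `w⁻ⁿ`, so they compose predictably with the linear maps `L_c`:
`m_A ∘ L_c = L_c ∘ m_{A cⁿ}` exactly, and `m_A ∘ L_c ∘ m_A = L_c ∘ m_{A (1 + cⁿ)}` near `0`.
Both sides of the functional equation thus reduce to `L_{Fβ} ∘ m_{A'}` for two parameters `A'`,
and the relation between `F`, `C` and `β` is exactly what makes the two parameters agree.
The only analytic point is the choice of branch: near `0` all arguments of `Complex.log`
stay in the right half-plane, where `log (x y) = log x + log y`.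
-/

open Complex

/-- `m_{A,n}(w) = w (1 + A wⁿ)^{-1/n}`, with the principal branch
`z^{1/n} = exp ((1/n) Log z)`. -/
noncomputable def mmap (n : ℕ) (A : ℂ) (w : ℂ) : ℂ :=
  w * Complex.exp (-(1 / (n : ℂ)) * Complex.log (1 + A * w ^ n))

namespace Complex

theorem log_mul_of_re_pos {x y : ℂ} (hx : 0 < x.re) (hy : 0 < y.re) :
    log (x * y) = log x + log y := by
  have hx' := abs_lt.mp (abs_arg_lt_pi_div_two_iff.mpr (Or.inl hx))
  have hy' := abs_lt.mp (abs_arg_lt_pi_div_two_iff.mpr (Or.inl hy))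
  rw [log_mul_eq_add_log_iff (by rintro rfl; simp at hx) (by rintro rfl; simp at hy)]
  constructor <;> linarith [hx'.1, hx'.2, hy'.1, hy'.2]

theorem re_one_add_pos {v : ℂ} (hv : ‖v‖ < 1) : 0 < (1 + v).re := by
  have := neg_le_of_abs_le (abs_re_le_norm v)
  simp only [add_re, one_re]
  linarith

end Complex

section mmap

variable {n : ℕ} (A : ℂ)

-- `1 / (0 : ℂ) = 0`, so `m_{A,0}` is the identity.
@[simp]
theorem mmap_zero (z : ℂ) : mmap 0 A z = z := by
  simp [mmap]

theorem mmap_mul_left (c z : ℂ) : mmap n A (c * z) = c * mmap n (A * c ^ n) z := by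
  simp only [mmap, mul_pow, mul_assoc]

theorem mmap_pow (hn : n ≠ 0) {z : ℂ} (hz : 1 + A * z ^ n ≠ 0) :
    mmap n A z ^ n = z ^ n / (1 + A * z ^ n) := by
  have hn' : (n : ℂ) ≠ 0 := Nat.cast_ne_zero.mpr hn
  rw [mmap, mul_pow, ← exp_nat_mul, ← mul_assoc, mul_neg, mul_one_div_cancel hn', neg_one_mul,
    exp_neg, exp_log hz, div_eq_mul_inv]

theorem mmap_mul_mmap_of_norm_lt (hn : n ≠ 0) {c z : ℂ} (hz : ‖A * z ^ n‖ < 1 / 2)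
    (hcz : ‖A * c ^ n * z ^ n‖ < 1 / 2) :
    mmap n A (c * mmap n A z) = c * mmap n (A * (1 + c ^ n)) z := by
  set a := 1 + A * z ^ n with ha
  have ha_norm : 1 / 2 < ‖a‖ := by
    have := norm_sub_norm_le (1 : ℂ) (-(A * z ^ n))
    rw [sub_neg_eq_add, norm_neg, norm_one] at this
    linarith
  have ha_re : 0 < a.re := re_one_add_pos (by linarith)
  have ha0 : a ≠ 0 := by rintro h; simp [h] at ha_re
  set b := 1 + A * c ^ n * z ^ n / a with hb
  have hb_re : 0 < b.re := by
    refine re_one_add_pos ?_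
    rw [norm_div, div_lt_one (by linarith)]
    linarith
  have hinner : 1 + A * (c * mmap n A z) ^ n = b := by
    rw [mul_pow, mmap_pow A hn ha0, hb]
    ring
  have hab : a * b = 1 + A * (1 + c ^ n) * z ^ n := by
    rw [hb]
    field_simp
    ring
  calc mmap n A (c * mmap n A z)
      = c * z * exp (-(1 / (n : ℂ)) * (log a + log b)) := by
        rw [mmap, hinner, mmap, ← ha, mul_add, exp_add]
        ring
    _ = c * mmap n (A * (1 + c ^ n)) z := by
        rw [← log_mul_of_re_pos ha_re hb_re, hab, mmap]
        ring

theorem eventually_norm_mul_pow_lt (hn : n ≠ 0) (a : ℂ) {ε : ℝ} (hε : 0 < ε) :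
    ∀ᶠ z in nhds (0 : ℂ), ‖a * z ^ n‖ < ε :=
  (continuous_const.mul (continuous_pow n)).norm.continuousAt.eventually_lt continuousAt_const
    (by simpa [zero_pow hn] using hε)

theorem eventually_mmap_mul_mmap (c : ℂ) :
    ∀ᶠ z in nhds (0 : ℂ), mmap n A (c * mmap n A z) = c * mmap n (A * (1 + c ^ n)) z := by
  rcases eq_or_ne n 0 with rfl | hn
  · simp
  filter_upwards [eventually_norm_mul_pow_lt hn A one_half_pos,
    eventually_norm_mul_pow_lt hn (A * c ^ n) one_half_pos] with z hz hcz
  exact mmap_mul_mmap_of_norm_lt A hn hz hcz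

end mmap

theorem stmt_14_general (n : ℕ) (A C β F : ℂ)
    (hC : C ≠ 0) (hβ : β ≠ 0) (hCn : C ^ n ≠ 1)
    (hFn : F ^ n = ((C * β) ^ n - 1) / (β ^ n * (C ^ n - 1))) :
    ∃ δ : ℝ, 0 < δ ∧ ∀ w : ℂ, 0 < ‖w‖ → ‖w‖ < δ →
      mmap n A (F * C⁻¹ * mmap n A (C * β * w)) =
        C⁻¹ * mmap n A (F * C * β * mmap n A w) := by
  have hparam : A * (1 + (F * C⁻¹) ^ n) * (C * β) ^ n = A * (1 + (F * C * β) ^ n) := by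
    rw [eq_div_iff (mul_ne_zero (pow_ne_zero n hβ) (sub_ne_zero.mpr hCn))] at hFn
    rw [mul_pow, inv_pow]
    field_simp
    linear_combination -A * C ^ n * hFn
  have hscale : Filter.Tendsto (fun w : ℂ => C * β * w) (nhds 0) (nhds 0) := by
    simpa using (continuous_const_mul (C * β)).tendsto 0
  obtain ⟨δ, hδ, hsmall⟩ := Metric.eventually_nhds_iff.mp
    ((hscale.eventually (eventually_mmap_mul_mmap A (F * C⁻¹))).and
      (eventually_mmap_mul_mmap A (F * C * β)))
  refine ⟨δ, hδ, fun w _ hw => ?_⟩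
  obtain ⟨hL, hR⟩ := hsmall (by simpa using hw)
  rw [hL, hR, mmap_mul_left, hparam]
  ring

/-- For every `A`, the map `h = m_{A,n}` solves the compatibility functional equation
`h ∘ L_{F/C} ∘ h ∘ L_{Cβ} = L_{1/C} ∘ h ∘ L_{FCβ} ∘ h` near the origin, whenever
`Fⁿ = ((Cβ)ⁿ - 1)/(βⁿ(Cⁿ - 1))`. -/
theorem stmt_14 (n : ℕ) (hn : 1 ≤ n) (A C β F : ℂ)
    (hC : C ≠ 0) (hβ : β ≠ 0) (hF : F ≠ 0) (hCn : C ^ n ≠ 1)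
    (hFn : F ^ n = ((C * β) ^ n - 1) / (β ^ n * (C ^ n - 1))) :
    ∃ δ : ℝ, 0 < δ ∧ ∀ w : ℂ, 0 < ‖w‖ → ‖w‖ < δ →
      mmap n A (F * C⁻¹ * mmap n A (C * β * w)) =
        C⁻¹ * mmap n A (F * C * β * mmap n A w) :=
  stmt_14_general n A C β F hC hβ hCn hFn
end
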